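/- Let H : ℝⁿ → ℝ be convex, twice continuously differentiable, and satisfy H(0) = 0, ∇H(0) = 0, and positive definiteness of the Hessian of H at 0 (i.e., ⟨v, D(∇H)(0) v⟩ > 0 for all v ≠ 0). Let J, R : ℝⁿ → ℝⁿˣⁿ assign to each state a skew-symmetric matrix J(x) and a symmetric positive semidefinite matrix R(x). Then the equilibrium x = 0 of the unforced port-Hamiltonian system ẋ = (J(x) − R(x)) ∇H(x) is Lyapunov stable: for every ε > 0 there exists δ > 0 such that every solution x : [t₀, ∞) → ℝⁿ of the system with ‖x(t₀)‖ < δ satisfies ‖x(t)‖ < ε for all t ≥ t₀. -/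

import Mathlib

open Matrix RealInnerProductSpace

/-- The gradient of a function on `ℝⁿ` (Euclidean space), via Mathlib's `gradient`. -/
noncomputable def grad {n : ℕ} (H : EuclideanSpace ℝ (Fin n) → ℝ) :
    EuclideanSpace ℝ (Fin n) → EuclideanSpace ℝ (Fin n) := gradient H

/-!
Since `J` is skew, `d/dt H(x t) = -⟪∇H, R ∇H⟫ ≤ 0` along the flow, so `H` is a Lyapunov function
as soon as `H y > H 0` for `y ≠ 0`. Convexity and `∇H(0) = 0` make `0` a global minimum. For
strictness, `ψ t = ⟪∇H(t y), y⟫` has derivative `⟪D∇H(0) y, y⟫ > 0` at `0`, so `ψ t > 0` for some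
`t ∈ (0, 1)`, and convexity on `[t, 1]` gives `H y ≥ H(t y) + (1 - t) ψ t > H 0`.
Then `H` has a minimum `m > H 0` on the sphere of radius `ε`, and a trajectory starting where
`H < m` never reaches that sphere.
-/

open Set Topology

theorem HasDerivAt.eventually_lt_of_pos {g : ℝ → ℝ} {c a : ℝ} (hg : HasDerivAt g c a)
    (hc : 0 < c) : ∀ᶠ t in 𝓝[>] a, g a < g t := by
  have hslope : ∀ᶠ t in 𝓝[>] a, 0 < slope g a t :=
    (hg.tendsto_slope.mono_left (nhdsGT_le_nhdsNE a)).eventually (lt_mem_nhds hc)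
  filter_upwards [hslope, self_mem_nhdsWithin] with t ht (hat : a < t)
  rw [slope_def_field] at ht
  have := (div_pos_iff_of_pos_right (sub_pos.2 hat)).1 ht
  linarith

section Convex

variable {E : Type*} [NormedAddCommGroup E] [NormedSpace ℝ E] {f : E → ℝ} {x : E}

theorem ConvexOn.isMinOn_of_hasFDerivAt_eq_zero (hf : ConvexOn ℝ univ f)
    (hx : HasFDerivAt f (0 : E →L[ℝ] ℝ) x) : IsMinOn f univ x := by
  intro y _
  have hline : HasDerivAt (f ∘ AffineMap.lineMap (k := ℝ) x y) 0 0 := by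
    rw [← AffineMap.lineMap_apply_zero (k := ℝ) x y] at hx
    simpa using hx.comp_hasDerivAt 0 AffineMap.hasDerivAt_lineMap
  simpa [slope_def_field] using
    (hf.comp_affineMap (AffineMap.lineMap x y)).le_slope_of_hasDerivAt
      (mem_univ 0) (mem_univ 1) one_pos hline

end Convex

section Gradient

variable {E : Type*} [NormedAddCommGroup E] [InnerProductSpace ℝ E] [CompleteSpace E]
  {f : E → ℝ}

theorem HasGradientAt.comp_hasDerivAt {g : E} {γ : ℝ → E} {v : E} {t : ℝ}
    (hf : HasGradientAt f g (γ t)) (hγ : HasDerivAt γ v t) :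
    HasDerivAt (f ∘ γ) ⟪g, v⟫ t := by
  simpa using (hasGradientAt_iff_hasFDerivAt.1 hf).comp_hasDerivAt t hγ

theorem ContDiff.differentiable_gradient (hf : ContDiff ℝ 2 f) :
    Differentiable ℝ (gradient f) := by
  have : ContDiff ℝ 1 (fderiv ℝ f) := hf.fderiv_right le_rfl
  exact ((InnerProductSpace.toDual ℝ E).symm.contDiff.comp this).differentiable one_ne_zero

theorem ConvexOn.lt_of_inner_fderiv_gradient_pos {x y : E} {A : E →L[ℝ] E}
    (hf : ConvexOn ℝ univ f) (hd : Differentiable ℝ f) (hx : gradient f x = 0)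
    (hA : HasFDerivAt (gradient f) A x) (hy : 0 < ⟪A (y - x), y - x⟫) : f x < f y := by
  set ℓ : ℝ →ᵃ[ℝ] E := AffineMap.lineMap x y
  set ψ : ℝ → ℝ := fun s => ⟪gradient f (ℓ s), y - x⟫
  have hℓ0 : ℓ 0 = x := AffineMap.lineMap_apply_zero x y
  have hℓ1 : ℓ 1 = y := AffineMap.lineMap_apply_one x y
  have hφ (s : ℝ) : HasDerivAt (f ∘ ℓ) (ψ s) s :=
    (hd _).hasGradientAt.comp_hasDerivAt AffineMap.hasDerivAt_lineMap
  have hψ : HasDerivAt ψ ⟪A (y - x), y - x⟫ 0 := by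
    rw [← hℓ0] at hA
    exact (hA.comp_hasDerivAt 0 AffineMap.hasDerivAt_lineMap).inner ℝ (hasDerivAt_const 0 _)
      |>.congr_deriv (by simp)
  obtain ⟨t, hψt, ht0, ht1⟩ : ∃ t, ψ 0 < ψ t ∧ 0 < t ∧ t < 1 :=
    ((hψ.eventually_lt_of_pos hy).and (Ioo_mem_nhdsGT one_pos)).exists
  have hψ0 : ψ 0 = 0 := by simp only [ψ, hℓ0, hx, inner_zero_left]
  have hcrit : HasFDerivAt f (0 : E →L[ℝ] ℝ) x := by
    simpa [hx] using hasGradientAt_iff_hasFDerivAt.1 (hd x).hasGradientAt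
  have hmin : f x ≤ f (ℓ t) := hf.isMinOn_of_hasFDerivAt_eq_zero hcrit (mem_univ _)
  have hslope :=
    (hf.comp_affineMap ℓ).le_slope_of_hasDerivAt (mem_univ t) (mem_univ 1) ht1 (hφ t)
  rw [slope_def_field, le_div_iff₀ (by linarith)] at hslope
  simp only [Function.comp_apply, hℓ1] at hslope
  nlinarith

theorem antitoneOn_comp_of_inner_gradient_nonpos (hd : Differentiable ℝ f) {x v : ℝ → E}
    {t₀ : ℝ} (hx : ∀ t ∈ Ici t₀, HasDerivAt x (v t) t)
    (hv : ∀ t ∈ Ici t₀, ⟪gradient f (x t), v t⟫ ≤ 0) : AntitoneOn (f ∘ x) (Ici t₀) := by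
  have hderiv (t : ℝ) (ht : t ∈ Ici t₀) : HasDerivAt (f ∘ x) ⟪gradient f (x t), v t⟫ t :=
    (hd _).hasGradientAt.comp_hasDerivAt (hx t ht)
  refine antitoneOn_of_hasDerivWithinAt_nonpos (convex_Ici t₀)
    (fun t ht => (hderiv t ht).continuousAt.continuousWithinAt)
    (fun t ht => (hderiv t (interior_subset ht)).hasDerivWithinAt)
    (fun t ht => hv t (interior_subset ht))

end Gradient

section Dissipation

variable {m α : Type*} [Fintype m] [CommRing α] [LinearOrder α] [IsStrictOrderedRing α]

theorem Matrix.dotProduct_mulVec_self_eq_zero_of_transpose_eq_neg {J : Matrix m m α}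
    (hJ : Jᵀ = -J) (v : m → α) : v ⬝ᵥ J *ᵥ v = 0 := by
  have h : v ⬝ᵥ J *ᵥ v = -(v ⬝ᵥ J *ᵥ v) :=
    calc v ⬝ᵥ J *ᵥ v = Jᵀ *ᵥ v ⬝ᵥ v := by rw [mulVec_transpose, dotProduct_mulVec]
      _ = -(v ⬝ᵥ J *ᵥ v) := by rw [hJ, neg_mulVec, neg_dotProduct, dotProduct_comm]
  linarith

theorem Matrix.dotProduct_sub_mulVec_nonpos {J R : Matrix m m α} (hJ : Jᵀ = -J) {v : m → α}
    (hR : 0 ≤ v ⬝ᵥ R *ᵥ v) : v ⬝ᵥ (J - R) *ᵥ v ≤ 0 := by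
  rw [sub_mulVec, dotProduct_sub, dotProduct_mulVec_self_eq_zero_of_transpose_eq_neg hJ]
  linarith

end Dissipation

section Lyapunov

variable {E : Type*} [NormedAddCommGroup E] [ProperSpace E] {V : E → ℝ}

theorem exists_gt_forall_mem_sphere_le (hV : Continuous V) (hpos : ∀ y ≠ 0, V 0 < V y) {ε : ℝ}
    (hε : 0 < ε) : ∃ m, V 0 < m ∧ ∀ y ∈ Metric.sphere (0 : E) ε, m ≤ V y := by
  rcases (Metric.sphere (0 : E) ε).eq_empty_or_nonempty with hempty | hne
  · exact ⟨V 0 + 1, by linarith, by simp [hempty]⟩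
  obtain ⟨y₀, hy₀, hmin⟩ := (isCompact_sphere (0 : E) ε).exists_isMinOn hne hV.continuousOn
  exact ⟨V y₀, hpos y₀ (Metric.ne_of_mem_sphere hy₀ hε.ne'), hmin⟩

theorem lyapunov_stable (hV : Continuous V) (hpos : ∀ y ≠ 0, V 0 < V y) (t₀ : ℝ) {ε : ℝ}
    (hε : 0 < ε) :
    ∃ δ > 0, ∀ x : ℝ → E, ContinuousOn x (Ici t₀) → AntitoneOn (V ∘ x) (Ici t₀) →
      ‖x t₀‖ < δ → ∀ t, t₀ ≤ t → ‖x t‖ < ε := by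
  obtain ⟨m, hm0, hm⟩ := exists_gt_forall_mem_sphere_le hV hpos hε
  obtain ⟨r, hr, hball⟩ :=
    Metric.eventually_nhds_iff.1 (hV.continuousAt.eventually (gt_mem_nhds hm0))
  refine ⟨min r ε, lt_min hr hε, fun x hx hVx hx₀ t ht => ?_⟩
  by_contra! hxt
  obtain ⟨s, hs, hsε⟩ := intermediate_value_Icc ht (hx.mono Icc_subset_Ici_self).norm
    ⟨(hx₀.trans_le (min_le_right _ _)).le, hxt⟩
  have hVs : m ≤ V (x s) := hm (x s) (mem_sphere_zero_iff_norm.2 hsε)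
  have hdecay : V (x s) ≤ V (x t₀) := hVx self_mem_Ici hs.1 hs.1
  have hV₀ : V (x t₀) < m := hball (by simpa using hx₀.trans_le (min_le_left _ _))
  linarith

end Lyapunov

theorem phs_equilibrium_lyapunov_stable_general {n : ℕ}
    (H : EuclideanSpace ℝ (Fin n) → ℝ)
    (hconv : ConvexOn ℝ Set.univ H)
    (hsmooth : ContDiff ℝ 2 H)
    (hgrad0 : grad H 0 = 0)
    (hhess : ∀ v : EuclideanSpace ℝ (Fin n), v ≠ 0 → 0 < ⟪v, fderiv ℝ (grad H) 0 v⟫)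
    (J R : EuclideanSpace ℝ (Fin n) → Matrix (Fin n) (Fin n) ℝ)
    (hJ : ∀ y, (J y)ᵀ = -(J y))
    (hRpsd : ∀ y, ∀ v : Fin n → ℝ, 0 ≤ v ⬝ᵥ (R y).mulVec v)
    (t₀ : ℝ) :
    ∀ ε : ℝ, 0 < ε → ∃ δ : ℝ, 0 < δ ∧
      ∀ x : ℝ → EuclideanSpace ℝ (Fin n),
        (∀ t : ℝ, t₀ ≤ t →
          HasDerivAt x (WithLp.toLp 2 ((J (x t) - R (x t)).mulVec (grad H (x t)))) t) →
        ‖x t₀‖ < δ → ∀ t : ℝ, t₀ ≤ t → ‖x t‖ < ε := by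
  intro ε hε
  have hd : Differentiable ℝ H := hsmooth.differentiable two_ne_zero
  have hpos (y) (hy : y ≠ 0) : H 0 < H y := by
    refine hconv.lt_of_inner_fderiv_gradient_pos hd hgrad0
      (hsmooth.differentiable_gradient 0).hasFDerivAt ?_
    rw [sub_zero, real_inner_comm]
    exact hhess y hy
  have hdissipative (y) : ⟪grad H y, WithLp.toLp 2 ((J y - R y) *ᵥ grad H y)⟫ ≤ 0 := by
    rw [EuclideanSpace.inner_eq_star_dotProduct, star_trivial, dotProduct_comm]
    exact dotProduct_sub_mulVec_nonpos (hJ y) (hRpsd y _)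
  obtain ⟨δ, hδ, hstable⟩ := lyapunov_stable hsmooth.continuous hpos t₀ hε
  exact ⟨δ, hδ, fun x hx => hstable x (fun t ht => (hx t ht).continuousAt.continuousWithinAt)
    (antitoneOn_comp_of_inner_gradient_nonpos hd hx fun t _ => hdissipative (x t))⟩

/-- For a convex, twice continuously differentiable Hamiltonian `H`
with `H(0) = 0`, `∇H(0) = 0`, and positive definite Hessian at `0`, the equilibrium
`x = 0` of the unforced port-Hamiltonian system `ẋ = (J(x) - R(x)) ∇H(x)` is Lyapunov
stable: for every `ε > 0` there is a `δ > 0` such that every solution starting with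
`‖x(t₀)‖ < δ` satisfies `‖x(t)‖ < ε` for all `t ≥ t₀`. -/
theorem phs_equilibrium_lyapunov_stable {n : ℕ}
    (H : EuclideanSpace ℝ (Fin n) → ℝ)
    (hconv : ConvexOn ℝ Set.univ H)
    (hsmooth : ContDiff ℝ 2 H)
    (h0 : H 0 = 0)
    (hgrad0 : grad H 0 = 0)
    (hhess : ∀ v : EuclideanSpace ℝ (Fin n), v ≠ 0 → 0 < ⟪v, fderiv ℝ (grad H) 0 v⟫)
    (J R : EuclideanSpace ℝ (Fin n) → Matrix (Fin n) (Fin n) ℝ)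
    (hJ : ∀ y, (J y)ᵀ = -(J y))
    (hRsym : ∀ y, (R y)ᵀ = R y)
    (hRpsd : ∀ y, ∀ v : Fin n → ℝ, 0 ≤ v ⬝ᵥ (R y).mulVec v)
    (t₀ : ℝ) :
    ∀ ε : ℝ, 0 < ε → ∃ δ : ℝ, 0 < δ ∧
      ∀ x : ℝ → EuclideanSpace ℝ (Fin n),
        (∀ t : ℝ, t₀ ≤ t →
          HasDerivAt x (WithLp.toLp 2 ((J (x t) - R (x t)).mulVec (grad H (x t)))) t) →
        ‖x t₀‖ < δ → ∀ t : ℝ, t₀ ≤ t → ‖x t‖ < ε :=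
  phs_equilibrium_lyapunov_stable_general H hconv hsmooth hgrad0 hhess J R hJ hRpsd t₀
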